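/- arXiv:1408.0137 — 2 statements merged into one kernel-verified Lean document; each statement's English description precedes it below -/
import Mathlib

section
/- Let M ≥ 2, let r : Fin M → ℝ satisfy 0 < r g < 1 for all g and Σ_g r g = 1, and let c > 0. Define a_g = c·Σ_{h<g} r h and b_g = a_g + (r g)·c, and define W_g : [0, c] → ℝ by W_g(t) = (1 − r g)(b_g − t) for t ∈ [a_g, b_g], W_g(t) = (r g)(t − b_g) for t ∈ [b_g, c], and W_g(t) = (r g)(c − b_g + t) for t ∈ [0, a_g]. Then for every t ∈ [0, c], Σ_g W_g(t) = (c/2)·Σ_g (r g)(1 − r g); in particular the total workload of the dominant flows is constant over the cycle and equals δ·c with δ = (1/2)Σ_g (r g)(1 − r g). -/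
open Set Finset

/-- In the heavy-traffic fluid model with `M` groups whose dominant relative loads
`r g` satisfy `Σ_g r g = 1`, the workload `W g t` of the dominant flow of group `g`
(draining at rate `1 − r g` during its green interval `[a_g, b_g]`, refilling at rate
`r g` during its red period) sums, at every time `t` of the cycle `[0, c]`, to the
constant `δ·c` where `δ = (1/2)·Σ_g (r g)(1 − r g)`. -/
theorem total_dominant_workload_constant (M : ℕ) (hM : 2 ≤ M) (r : Fin M → ℝ)
    (hr : ∀ g, 0 < r g ∧ r g < 1) (hsum : ∑ g, r g = 1) (c : ℝ) (hc : 0 < c)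
    (a b : Fin M → ℝ)
    (ha : ∀ g, a g = c * ∑ h ∈ Finset.Iio g, r h)
    (hb : ∀ g, b g = a g + r g * c)
    (W : Fin M → ℝ → ℝ)
    (hWgreen : ∀ g, ∀ t ∈ Icc (a g) (b g), W g t = (1 - r g) * (b g - t))
    (hWred : ∀ g, ∀ t ∈ Icc (b g) c, W g t = r g * (t - b g))
    (hWpre : ∀ g, ∀ t ∈ Icc 0 (a g), W g t = r g * (c - b g + t)) :
    ∀ t ∈ Icc (0:ℝ) c, ∑ g, W g t = c / 2 * ∑ g, r g * (1 - r g) := by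
  intro t ht
  obtain ⟨ht0, htc⟩ := ht
  set r' : ℕ → ℝ := fun i => if h : i < M then r ⟨i, h⟩ else 0 with hr'def
  have hr'v : ∀ h : Fin M, r' (h : ℕ) = r h := by
    intro h
    simp [hr'def, h.isLt]
  have hr'nn : ∀ i, 0 ≤ r' i := by
    intro i
    by_cases h : i < M
    · simp only [hr'def, dif_pos h]; exact (hr _).1.le
    · simp only [hr'def, dif_neg h]
      exact le_rfl
  have hsum' : ∑ i ∈ Finset.range M, r' i = 1 := by
    rw [← Fin.sum_univ_eq_sum_range]
    simp only [hr'v]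
    exact hsum
  have haA : ∀ g : Fin M, a g = c * ∑ i ∈ Finset.range (g : ℕ), r' i := by
    intro g
    rw [ha g]
    congr 1
    rw [← Nat.Iio_eq_range, ← Fin.map_valEmbedding_Iio, Finset.sum_map]
    exact Finset.sum_congr rfl fun h _ => (hr'v h).symm
  have hbA : ∀ g : Fin M, b g = c * ∑ i ∈ Finset.range ((g : ℕ) + 1), r' i := by
    intro g
    rw [hb g, haA g, Finset.sum_range_succ, hr'v g]
    ring
  have hab : ∀ g : Fin M, a g ≤ b g := by
    intro g
    have := mul_pos (hr g).1 hc
    rw [hb g]; linarith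
  have hW : ∀ g : Fin M, W g t = r g * (t - b g) + (max (b g) t - max (a g) t) := by
    intro g
    rcases le_total t (a g) with h | h
    · rw [hWpre g t ⟨ht0, h⟩, max_eq_left (h.trans (hab g)), max_eq_left h]
      linear_combination (-1 : ℝ) * hb g
    · rcases le_total t (b g) with h2 | h2
      · rw [hWgreen g t ⟨h, h2⟩, max_eq_left h2, max_eq_right h]
        ring
      · rw [hWred g t ⟨h2, htc⟩, max_eq_right h2, max_eq_right h]
        ring
  have htel : ∑ g : Fin M, (max (b g) t - max (a g) t) = c - t := by
    calc ∑ g : Fin M, (max (b g) t - max (a g) t)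
        = ∑ g : Fin M, (max (c * ∑ i ∈ Finset.range ((g : ℕ) + 1), r' i) t
            - max (c * ∑ i ∈ Finset.range (g : ℕ), r' i) t) :=
          Finset.sum_congr rfl fun g _ => by rw [haA g, hbA g]
      _ = ∑ k ∈ Finset.range M, (max (c * ∑ i ∈ Finset.range (k + 1), r' i) t
            - max (c * ∑ i ∈ Finset.range k, r' i) t) :=
          Fin.sum_univ_eq_sum_range (fun k => max (c * ∑ i ∈ Finset.range (k + 1), r' i) t
            - max (c * ∑ i ∈ Finset.range k, r' i) t) M
      _ = max (c * ∑ i ∈ Finset.range M, r' i) t - max (c * ∑ i ∈ Finset.range 0, r' i) t :=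
          Finset.sum_range_sub (fun k => max (c * ∑ i ∈ Finset.range k, r' i) t) M
      _ = c - t := by
          rw [hsum']
          simp only [Finset.range_zero, Finset.sum_empty, mul_zero, mul_one]
          rw [max_eq_left htc, max_eq_right ht0]
  have quad : ∀ n : ℕ, 2 * ∑ k ∈ Finset.range n, r' k * ∑ i ∈ Finset.range k, r' i
      + ∑ k ∈ Finset.range n, r' k ^ 2 = (∑ k ∈ Finset.range n, r' k) ^ 2 := by
    intro n
    induction n with
    | zero => simp
    | succ n ih =>
      rw [Finset.sum_range_succ, Finset.sum_range_succ, Finset.sum_range_succ]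
      linear_combination ih
  have hP : ∑ g : Fin M, r g ^ 2 = ∑ k ∈ Finset.range M, r' k ^ 2 := by
    rw [← Fin.sum_univ_eq_sum_range (fun k => r' k ^ 2) M]
    exact Finset.sum_congr rfl fun g _ => by rw [hr'v]
  have hQ : ∑ g : Fin M, r g * a g
      = c * ∑ k ∈ Finset.range M, r' k * ∑ i ∈ Finset.range k, r' i := by
    rw [Finset.mul_sum,
      ← Fin.sum_univ_eq_sum_range (fun k => c * (r' k * ∑ i ∈ Finset.range k, r' i)) M]
    exact Finset.sum_congr rfl fun g _ => by rw [haA g, hr'v]; ring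
  have hQval : 2 * (∑ g : Fin M, r g * a g) + c * ∑ g : Fin M, r g ^ 2 = c := by
    have h := quad M
    rw [hsum'] at h
    rw [hQ, hP]
    linear_combination c * h
  have hsplit : ∑ g : Fin M, r g * (t - b g)
      = t - (∑ g : Fin M, r g * a g) - c * ∑ g : Fin M, r g ^ 2 := by
    calc ∑ g : Fin M, r g * (t - b g)
        = ∑ g : Fin M, (r g * t - r g * a g - c * r g ^ 2) :=
          Finset.sum_congr rfl fun g _ => by rw [hb g]; ring
      _ = (∑ g : Fin M, r g) * t - (∑ g : Fin M, r g * a g) - c * ∑ g : Fin M, r g ^ 2 := by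
          rw [Finset.sum_sub_distrib, Finset.sum_sub_distrib, ← Finset.sum_mul, ← Finset.mul_sum]
      _ = t - (∑ g : Fin M, r g * a g) - c * ∑ g : Fin M, r g ^ 2 := by
          rw [hsum]; ring
  have hRHS : ∑ g : Fin M, r g * (1 - r g) = 1 - ∑ g : Fin M, r g ^ 2 := by
    have h1 : ∑ g : Fin M, r g * (1 - r g) = (∑ g : Fin M, r g) - ∑ g : Fin M, r g ^ 2 := by
      rw [← Finset.sum_sub_distrib]
      exact Finset.sum_congr rfl fun g _ => by ring
    rw [h1, hsum]
  calc ∑ g : Fin M, W g t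
      = ∑ g : Fin M, (r g * (t - b g) + (max (b g) t - max (a g) t)) :=
        Finset.sum_congr rfl fun g _ => hW g
    _ = (∑ g : Fin M, r g * (t - b g)) + ∑ g : Fin M, (max (b g) t - max (a g) t) :=
        Finset.sum_add_distrib
    _ = c / 2 * ∑ g, r g * (1 - r g) := by
        rw [hsplit, htel, hRHS]
        linarith [hQval]
end

section
/- Fix M ≥ 1 groups indexed cyclically modulo M, a distinguished group g, and for each group m a finite index set of flows. Let the following real parameters be given: loads ρ_{m,k} ≥ 0 for each flow {m,k}; mean headways b_{m,k} > 0 and mean residual headways br_{m,k} ≥ 0; deterministic all-red times R_m ≥ 0 with R := Σ_m R_m > 0; a flow {g,j} in group g and a real κ ≥ 0. Write ρ = Σ_{m,k} ρ_{m,k} and ρ_{m,•} = Σ_k ρ_{m,k}. For i = 0,…,M−1 write group g+i for the group whose green period occurs i steps after group g's (indices mod M, g+0 = g). Then the following algebraic identity holds: ρ_{g,j}·(κ·br_{g,j} + b_{g,j}) + Σ_{i=1}^{M−1} Σ_k ρ_{g+i,k}·( br_{g+i,k} + Σ_{l=i}^{M−1} R_{g+l} + b_{g,j} ) + Σ_{i=0}^{M−1}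 (R_{g+i}/R)·[ (R_{g+i}/2)·(1 − ρ + 2·Σ_{l=i+1}^{M−1} ρ_{g+l,•} + ρ_{g,j}) + (Σ_{k'=0}^{i−1} R_{g+k'})·(Σ_{l=i+1}^{M−1} ρ_{g+l,•} + ρ_{g,j}) + (Σ_{k'=i+1}^{M−1} R_{g+k'})·(1 − ρ + Σ_{l=i+1}^{M−1} ρ_{g+l,•}) + (1 − ρ)·b_{g,j} ] = ρ_{g,j}·(κ − 1)·br_{g,j} + Σ_{m,k} ρ_{m,k}·br_{m,k} + b_{g,j} − Σ_{k ≠ j} ρ_{g,k}·(br_{g,k} + b_{g,j}) + (1/2)·(1 + ρ + ρ_{g,j} − 2ρ_{g,•})·R. (This is the claim that the light-traffic expression (19) for E[W^LT_{g,j}], in the case of deterministic all-red times where E[R_m^res] = R_m/2, reduces to the compact closed form (13), using that ρ·E[B^res] = Σ_{m,k} ρ_{m,k}·br_{m,k}.) -/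
open Finset
open Fin.NatCast

/-!
Reindex the groups cyclically from `g`, so that group `g + i` has all-red time `r i` and load
`a i`, and let `L i = r 0 + ⋯ + r (i - 1)` and `S = L M`. The all-red sums in the expression are
then `S - L i` and `S - L i - r i`, and the only terms of degree two in the all-red times,
`Σ r i ^ 2 / 2 + Σ r i * L i`, add up to `S ^ 2 / 2`, which the normalisation by `S` turns into a
linear term. The remaining cross terms `Σ a l * L l`, one from the crossing-vehicle part and one
(after exchanging the order of summation) from the all-red part, cancel.
-/

theorem sq_sum_range_eq_sum_sq_add_two_mul {R : Type*} [CommSemiring R] (f : ℕ → R) (n : ℕ) :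
    (∑ i ∈ range n, f i) ^ 2
      = ∑ i ∈ range n, f i ^ 2 + 2 * ∑ i ∈ range n, f i * ∑ k ∈ range i, f k := by
  induction n with
  | zero => simp
  | succ n ih => simp only [sum_range_succ, add_sq, ih]; ring

theorem sum_Ico_succ_eq_sub {G : Type*} [AddCommGroup G] (f : ℕ → G) {i n : ℕ} (h : i < n) :
    ∑ k ∈ Ico (i + 1) n, f k = ∑ k ∈ range n, f k - ∑ k ∈ range i, f k - f i := by
  rw [sum_Ico_eq_sub f h, sum_range_succ, sub_add_eq_sub_sub]

theorem sum_mul_sum_Ico_succ_comm {R : Type*} [NonUnitalNonAssocSemiring R] (f h : ℕ → R)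
    (n : ℕ) :
    ∑ i ∈ range n, f i * ∑ l ∈ Ico (i + 1) n, h l
      = ∑ l ∈ range n, (∑ i ∈ range l, f i) * h l := by
  simp only [range_eq_Ico, mul_sum, sum_mul, sum_Ico_Ico_comm' 0 n (fun i l => f i * h l)]

theorem sum_mul_add_eq {ι R : Type*} [NonUnitalNonAssocSemiring R] (s : Finset ι) (w f : ι → R)
    (c : R) : ∑ k ∈ s, w k * (f k + c) = ∑ k ∈ s, w k * f k + (∑ k ∈ s, w k) * c := by
  simp only [mul_add, sum_add_distrib, sum_mul]

theorem sum_range_add_natCast {β : Type*} [AddCommMonoid β] (M : ℕ) [NeZero M] (g : Fin M)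
    (F : Fin M → β) : ∑ i ∈ range M, F (g + i) = ∑ m, F m := by
  rw [← Fin.sum_univ_eq_sum_range (fun i => F (g + i))]
  simp only [Fin.cast_val_eq_self]
  exact Fintype.sum_equiv (Equiv.addLeft g) _ _ fun _ => rfl

section LightTraffic

-- `r i` and `a i` are the all-red time and the load of the `i`-th group after `g`; `P` and `B` are
-- the load and the mean headway of the tagged flow `{g, j}`.
variable (M : ℕ) (r a : ℕ → ℝ) (P B : ℝ)

theorem sum_Ico_one_mul_sum_Ico_add (hM : 0 < M) :
    ∑ i ∈ Ico 1 M, a i * (∑ l ∈ Ico i M, r l + B)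
      = (∑ i ∈ range M, a i - a 0) * (∑ i ∈ range M, r i + B)
        - ∑ l ∈ range M, (∑ k ∈ range l, r k) * a l := by
  have htail : ∀ i ∈ Ico 1 M, a i * (∑ l ∈ Ico i M, r l + B)
      = a i * (∑ l ∈ range M, r l + B) - (∑ k ∈ range i, r k) * a i := by
    intro i hi
    rw [sum_Ico_eq_sub r (mem_Ico.mp hi).2.le]
    ring
  rw [sum_congr rfl htail, sum_sub_distrib, ← sum_mul, sum_range_eq_add_Ico a hM,
    sum_range_eq_add_Ico (fun l => (∑ k ∈ range l, r k) * a l) hM]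
  simp

theorem sum_mul_allRed_eq :
    let S := ∑ i ∈ range M, r i
    let A := ∑ i ∈ range M, a i
    ∑ i ∈ range M, r i *
        (r i / 2 * (1 - A + 2 * (∑ l ∈ Ico (i + 1) M, a l) + P)
          + (∑ k ∈ range i, r k) * ((∑ l ∈ Ico (i + 1) M, a l) + P)
          + (∑ k ∈ Ico (i + 1) M, r k) * (1 - A + ∑ l ∈ Ico (i + 1) M, a l)
          + (1 - A) * B)
      = S * ((1 - A + P) / 2 * S + ∑ l ∈ range M, (∑ k ∈ range l, r k) * a l
          + (1 - A) * B) := by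
  intro S A
  have hexpand : ∀ i ∈ range M, r i *
        (r i / 2 * (1 - A + 2 * (∑ l ∈ Ico (i + 1) M, a l) + P)
          + (∑ k ∈ range i, r k) * ((∑ l ∈ Ico (i + 1) M, a l) + P)
          + (∑ k ∈ Ico (i + 1) M, r k) * (1 - A + ∑ l ∈ Ico (i + 1) M, a l)
          + (1 - A) * B)
      = (P - 1 + A) / 2 * (r i ^ 2 + 2 * (r i * ∑ k ∈ range i, r k))
        + S * (r i * ∑ l ∈ Ico (i + 1) M, a l) + ((1 - A) * (S + B)) * r i := by
    intro i hi
    rw [sum_Ico_succ_eq_sub r (mem_range.mp hi)]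
    ring
  simp only [sum_congr rfl hexpand, sum_add_distrib, ← mul_sum]
  rw [← sq_sum_range_eq_sum_sq_add_two_mul, sum_mul_sum_Ico_succ_comm]
  ring

theorem sum_div_mul_allRed_eq (hS : ∑ i ∈ range M, r i ≠ 0) :
    let S := ∑ i ∈ range M, r i
    let A := ∑ i ∈ range M, a i
    ∑ i ∈ range M, r i / S *
        (r i / 2 * (1 - A + 2 * (∑ l ∈ Ico (i + 1) M, a l) + P)
          + (∑ k ∈ range i, r k) * ((∑ l ∈ Ico (i + 1) M, a l) + P)
          + (∑ k ∈ Ico (i + 1) M, r k) * (1 - A + ∑ l ∈ Ico (i + 1) M, a l)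
          + (1 - A) * B)
      = (1 - A + P) / 2 * S + ∑ l ∈ range M, (∑ k ∈ range l, r k) * a l + (1 - A) * B := by
  intro S A
  rw [← mul_right_inj' hS, mul_sum, ← sum_mul_allRed_eq]
  exact sum_congr rfl fun i _ => by rw [← mul_assoc, mul_div_cancel₀ (r i) hS]

end LightTraffic

theorem LT_expression_reduces_general (M : ℕ) [NeZero M] (K : Fin M → ℕ)
    (ρ : (m : Fin M) → Fin (K m) → ℝ) (b : (m : Fin M) → Fin (K m) → ℝ)
    (br : (m : Fin M) → Fin (K m) → ℝ) (R : Fin M → ℝ)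
    (g : Fin M) (j : Fin (K g)) (κ : ℝ)
    (hRtot : 0 < ∑ m, R m) :
    let ρtot : ℝ := ∑ m, ∑ k, ρ m k
    let ρdot : Fin M → ℝ := fun m => ∑ k, ρ m k
    let Rtot : ℝ := ∑ m, R m
    ρ g j * (κ * br g j + b g j)
      + (∑ i ∈ Finset.Ico 1 M, ∑ k, ρ (g + (i : Fin M)) k *
          (br (g + (i : Fin M)) k + (∑ l ∈ Finset.Ico i M, R (g + (l : Fin M))) + b g j))
      + (∑ i ∈ Finset.range M, R (g + (i : Fin M)) / Rtot *
          (R (g + (i : Fin M)) / 2 *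
              (1 - ρtot + 2 * (∑ l ∈ Finset.Ico (i + 1) M, ρdot (g + (l : Fin M))) + ρ g j)
            + (∑ k' ∈ Finset.range i, R (g + (k' : Fin M))) *
              ((∑ l ∈ Finset.Ico (i + 1) M, ρdot (g + (l : Fin M))) + ρ g j)
            + (∑ k' ∈ Finset.Ico (i + 1) M, R (g + (k' : Fin M))) *
              (1 - ρtot + ∑ l ∈ Finset.Ico (i + 1) M, ρdot (g + (l : Fin M)))
            + (1 - ρtot) * b g j))
      = ρ g j * (κ - 1) * br g j + (∑ m, ∑ k, ρ m k * br m k) + b g j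
        - (∑ k ∈ Finset.univ.erase j, ρ g k * (br g k + b g j))
        + 1 / 2 * (1 + ρtot + ρ g j - 2 * ρdot g) * Rtot := by
  intro ρtot ρdot Rtot
  have hM := Nat.pos_of_neZero M
  have hRtot' : Rtot = ∑ i ∈ range M, R (g + i) := (sum_range_add_natCast M g R).symm
  have hρtot' : ρtot = ∑ i ∈ range M, ρdot (g + i) := (sum_range_add_natCast M g ρdot).symm
  have hsplit (i : ℕ) (c : ℝ) : ∑ k, ρ (g + i) k * (br (g + i) k + c + b g j)
      = ∑ k, ρ (g + i) k * br (g + i) k + ρdot (g + i) * (c + b g j) := by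
    simp only [add_assoc]
    exact sum_mul_add_eq _ _ _ _
  have hflows : ∑ i ∈ Ico 1 M, ∑ k, ρ (g + i) k * br (g + i) k
      = ∑ m, ∑ k, ρ m k * br m k - ∑ k, ρ g k * br g k := by
    rw [← sum_range_add_natCast M g, sum_range_eq_add_Ico _ hM, Nat.cast_zero, add_zero]
    ring
  have hothers : ∑ k ∈ univ.erase j, ρ g k * (br g k + b g j)
      = ∑ k, ρ g k * br g k + ρdot g * b g j - ρ g j * (br g j + b g j) := by
    rw [sum_erase_eq_sub (mem_univ j), sum_mul_add_eq]
  have hcrossing := sum_Ico_one_mul_sum_Ico_add M (fun i => R (g + i)) (fun i => ρdot (g + i))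
    (b g j) hM
  have hallRed := sum_div_mul_allRed_eq M (fun i => R (g + i)) (fun i => ρdot (g + i)) (ρ g j)
    (b g j) (hRtot' ▸ hRtot.ne')
  simp only [Nat.cast_zero, add_zero] at hcrossing
  simp only [hsplit, sum_add_distrib]
  rw [hflows, hothers, hRtot', hρtot']
  linear_combination hcrossing + hallRed

/-- The light-traffic expression (19) for `E[W^LT_{g,j}]`, with deterministic all-red times
(`E[R_m^res] = R_m/2`), reduces to the compact closed form (13).  Groups are indexed
cyclically modulo `M` (group `g + i` has its green period `i` steps after group `g`'s),
`ρtot = Σ ρ_{m,k}`, `ρdot m = Σ_k ρ_{m,k}`, `Rtot = Σ_m R_m`, and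
`κ = E[Â_{g,j}]·ĝ_{g,j}(0)`. -/
theorem LT_expression_reduces (M : ℕ) [NeZero M] (K : Fin M → ℕ)
    (ρ : (m : Fin M) → Fin (K m) → ℝ) (b : (m : Fin M) → Fin (K m) → ℝ)
    (br : (m : Fin M) → Fin (K m) → ℝ) (R : Fin M → ℝ)
    (g : Fin M) (j : Fin (K g)) (κ : ℝ)
    (hρ : ∀ m k, 0 ≤ ρ m k) (hb : ∀ m k, 0 < b m k) (hbr : ∀ m k, 0 ≤ br m k)
    (hR : ∀ m, 0 ≤ R m) (hRtot : 0 < ∑ m, R m) (hκ : 0 ≤ κ) :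
    let ρtot : ℝ := ∑ m, ∑ k, ρ m k
    let ρdot : Fin M → ℝ := fun m => ∑ k, ρ m k
    let Rtot : ℝ := ∑ m, R m
    ρ g j * (κ * br g j + b g j)
      + (∑ i ∈ Finset.Ico 1 M, ∑ k, ρ (g + (i : Fin M)) k *
          (br (g + (i : Fin M)) k + (∑ l ∈ Finset.Ico i M, R (g + (l : Fin M))) + b g j))
      + (∑ i ∈ Finset.range M, R (g + (i : Fin M)) / Rtot *
          (R (g + (i : Fin M)) / 2 *
              (1 - ρtot + 2 * (∑ l ∈ Finset.Ico (i + 1) M, ρdot (g + (l : Fin M))) + ρ g j)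
            + (∑ k' ∈ Finset.range i, R (g + (k' : Fin M))) *
              ((∑ l ∈ Finset.Ico (i + 1) M, ρdot (g + (l : Fin M))) + ρ g j)
            + (∑ k' ∈ Finset.Ico (i + 1) M, R (g + (k' : Fin M))) *
              (1 - ρtot + ∑ l ∈ Finset.Ico (i + 1) M, ρdot (g + (l : Fin M)))
            + (1 - ρtot) * b g j))
      = ρ g j * (κ - 1) * br g j + (∑ m, ∑ k, ρ m k * br m k) + b g j
        - (∑ k ∈ Finset.univ.erase j, ρ g k * (br g k + b g j))
        + 1 / 2 * (1 + ρtot + ρ g j - 2 * ρdot g) * Rtot :=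
  LT_expression_reduces_general M K ρ b br R g j κ hRtot
end
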